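/- arXiv:1402.7108 — 3 statements merged into one kernel-verified Lean document; each statement's English description precedes it below -/
import Mathlib

section
/- Let (K,J) be a 2-site. The composite of two J-locally split 1-arrows is J-locally split. -/
open CategoryTheory Bicategory

universe w v u

variable {B : Type u} [Bicategory.{w, v} B]

/-- Postcomposition with a 1-morphism, as a functor between hom-categories. -/
@[simps] def Postcomp {a b : B} (q : a ⟶ b) (z : B) : (z ⟶ a) ⥤ (z ⟶ b) where
  obj h := h ≫ q
  map α := α ▷ q

/-- A 1-morphism is ff if all postcomposition functors are fully faithful. -/
def IsFF {a b : B} (q : a ⟶ b) : Prop :=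
  ∀ z : B, (Postcomp q z).Full ∧ (Postcomp q z).Faithful

/-- Internal equivalence in a bicategory. -/
def IsIntEquiv {a b : B} (f : a ⟶ b) : Prop :=
  ∃ g : b ⟶ a, Nonempty (f ≫ g ≅ 𝟙 a) ∧ Nonempty (g ≫ f ≅ 𝟙 b)

/-- A fully faithful singleton coverage on a 2-category; a 2-site. -/
structure TwoSite (B : Type u) [Bicategory.{w, v} B] where
  J : ∀ ⦃a b : B⦄, (a ⟶ b) → Prop
  id_mem : ∀ a : B, J (𝟙 a)
  comp_mem : ∀ ⦃a b c : B⦄ {f : a ⟶ b} {g : b ⟶ c}, J f → J g → J (f ≫ g)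
  square : ∀ ⦃u x y : B⦄ (q : u ⟶ x), J q → ∀ f : y ⟶ x,
    ∃ (v : B) (k : v ⟶ y) (h : v ⟶ u), J k ∧ Nonempty (h ≫ q ≅ k ≫ f)
  ff : ∀ ⦃a b : B⦄ {q : a ⟶ b}, J q → IsFF q

/-- A 1-arrow is J-locally split. -/
def LocallySplit (S : TwoSite B) {x y : B} (f : x ⟶ y) : Prop :=
  ∃ (u : B) (j : u ⟶ y), S.J j ∧ ∃ s : u ⟶ x, Nonempty (s ≫ f ≅ j)

/-- A weak equivalence: ff and J-locally split. -/
def WeakEquiv (S : TwoSite B) {x y : B} (f : x ⟶ y) : Prop :=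
  IsFF f ∧ LocallySplit S f

/-- composite of J-locally split arrows is J-locally split. -/
theorem locallySplit_comp (S : TwoSite B) {x y z : B} {f : x ⟶ y} {g : y ⟶ z}
    (hf : LocallySplit S f) (hg : LocallySplit S g) :
    LocallySplit S (f ≫ g) := by
  obtain ⟨u, j, hj, s, ⟨e1⟩⟩ := hf
  obtain ⟨v, k, hk, t, ⟨e2⟩⟩ := hg
  obtain ⟨w, m, h, hm, ⟨esq⟩⟩ := S.square j hj t
  refine ⟨w, m ≫ k, S.comp_mem hm hk, h ≫ s, ⟨?_⟩⟩
  calc (h ≫ s) ≫ f ≫ g ≅ h ≫ s ≫ f ≫ g := α_ _ _ _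
    _ ≅ h ≫ (s ≫ f) ≫ g := whiskerLeftIso h (α_ _ _ _).symm
    _ ≅ h ≫ j ≫ g := whiskerLeftIso h (whiskerRightIso e1 g)
    _ ≅ (h ≫ j) ≫ g := (α_ _ _ _).symm
    _ ≅ (m ≫ t) ≫ g := whiskerRightIso esq g
    _ ≅ m ≫ t ≫ g := α_ _ _ _
    _ ≅ m ≫ k := whiskerLeftIso m e2
end

section
/- Let (K,J) be a 2-site. The class W_J of weak equivalences contains all identities and is closed under composition and under isomorphism of 1-arrows (condition BF2 of Pronk). -/
open CategoryTheory Bicategory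

universe w v u

variable {B : Type u} [Bicategory.{w, v} B]

/-!
Full faithfulness of `q` is a property of the functors `- ≫ q`, and these are identified, up to
natural isomorphism, with the identity for `q = 𝟙`, with the composite `(- ≫ f) ⋙ (- ≫ g)` for
`q = f ≫ g`, and with each other along an invertible 2-cell. For local splitness of `f ≫ g`, pull
the cover `j_f` along the local section `s_g` of `g` with `S.square` and compose the sections.
-/

lemma isFF_of_iso_postcomp {a b : B} {q : a ⟶ b} (F : ∀ z : B, (z ⟶ a) ⥤ (z ⟶ b))
    (e : ∀ z, F z ≅ Postcomp q z) (hF : ∀ z, (F z).Full ∧ (F z).Faithful) : IsFF q := fun z =>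
  have := (hF z).1
  have := (hF z).2
  ⟨Functor.Full.of_iso (e z), Functor.Faithful.of_iso (e z)⟩

lemma isFF_id (a : B) : IsFF (𝟙 a) :=
  isFF_of_iso_postcomp (fun z => 𝟭 (z ⟶ a)) (fun z => (rightUnitorNatIso z a).symm)
    (fun _ => ⟨inferInstance, inferInstance⟩)

lemma IsFF.comp {a b c : B} {f : a ⟶ b} {g : b ⟶ c} (hf : IsFF f) (hg : IsFF g) :
    IsFF (f ≫ g) :=
  isFF_of_iso_postcomp (fun z => Postcomp f z ⋙ Postcomp g z)
    (fun z => associatorNatIsoLeft z f g)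
    (fun z =>
      have := (hf z).1
      have := (hf z).2
      have := (hg z).1
      have := (hg z).2
      ⟨inferInstance, inferInstance⟩)

lemma IsFF.of_iso {a b : B} {f g : a ⟶ b} (hf : IsFF f) (e : f ≅ g) : IsFF g :=
  isFF_of_iso_postcomp (Postcomp f) (fun z => (postcomposing z a b).mapIso e) hf

lemma locallySplit_id (S : TwoSite B) (a : B) : LocallySplit S (𝟙 a) :=
  ⟨a, 𝟙 a, S.id_mem a, 𝟙 a, ⟨λ_ _⟩⟩

lemma LocallySplit.comp {S : TwoSite B} {a b c : B} {f : a ⟶ b} {g : b ⟶ c}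
    (hf : LocallySplit S f) (hg : LocallySplit S g) : LocallySplit S (f ≫ g) := by
  obtain ⟨v, jf, hjf, sf, ⟨ef⟩⟩ := hf
  obtain ⟨u, jg, hjg, sg, ⟨eg⟩⟩ := hg
  obtain ⟨w, k, h, hk, ⟨esq⟩⟩ := S.square jf hjf sg
  refine ⟨w, k ≫ jg, S.comp_mem hk hjg, h ≫ sf, ⟨?_⟩⟩
  calc (h ≫ sf) ≫ f ≫ g ≅ (h ≫ sf ≫ f) ≫ g := (α_ _ _ _).symm ≪≫ whiskerRightIso (α_ _ _ _) g
    _ ≅ (h ≫ jf) ≫ g := whiskerRightIso (whiskerLeftIso h ef) g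
    _ ≅ (k ≫ sg) ≫ g := whiskerRightIso esq g
    _ ≅ k ≫ jg := α_ _ _ _ ≪≫ whiskerLeftIso k eg

lemma LocallySplit.of_iso {S : TwoSite B} {a b : B} {f g : a ⟶ b} (hf : LocallySplit S f)
    (e : f ≅ g) : LocallySplit S g :=
  let ⟨u, j, hj, s, ⟨es⟩⟩ := hf
  ⟨u, j, hj, s, ⟨(whiskerLeftIso s e).symm ≪≫ es⟩⟩

/-- BF2 for the class of weak equivalences. -/
theorem weakEquiv_BF2 (S : TwoSite B) :
    (∀ a : B, WeakEquiv S (𝟙 a)) ∧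
    (∀ ⦃a b c : B⦄ {f : a ⟶ b} {g : b ⟶ c},
      WeakEquiv S f → WeakEquiv S g → WeakEquiv S (f ≫ g)) ∧
    (∀ ⦃a b : B⦄ {f g : a ⟶ b}, WeakEquiv S f → Nonempty (f ≅ g) →
      WeakEquiv S g) :=
  ⟨fun a => ⟨isFF_id a, locallySplit_id S a⟩,
    fun _ _ _ _ _ hf hg => ⟨hf.1.comp hg.1, hf.2.comp hg.2⟩,
    fun _ _ _ _ hf ⟨e⟩ => ⟨hf.1.of_iso e, hf.2.of_iso e⟩⟩
end

section
/- Let (K,J) be a 2-site. For every weak equivalence w : x ⟶ y and every 1-arrow f : z ⟶ y, there exists an object p, a weak equivalence v : p ⟶ z, a 1-arrow g : p ⟶ x, and an invertible 2-cell g ≫ w ≅ v ≫ f (condition BF3 of Pronk holds for W_J). -/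
open CategoryTheory Bicategory

universe w v u

variable {B : Type u} [Bicategory.{w, v} B]

theorem TwoSite.weakEquiv_of_J (S : TwoSite B) {a b : B} {q : a ⟶ b} (hq : S.J q) :
    WeakEquiv S q :=
  ⟨S.ff hq, a, q, hq, 𝟙 a, ⟨λ_ q⟩⟩

theorem LocallySplit.exists_J_square {S : TwoSite B} {x y z : B} {w : x ⟶ y}
    (hw : LocallySplit S w) (f : z ⟶ y) :
    ∃ (p : B) (k : p ⟶ z) (g : p ⟶ x), S.J k ∧ Nonempty (g ≫ w ≅ k ≫ f) := by
  obtain ⟨u, j, hj, s, ⟨e⟩⟩ := hw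
  obtain ⟨p, k, h, hk, ⟨σ⟩⟩ := S.square j hj f
  exact ⟨p, k, h ≫ s, hk, ⟨α_ h s w ≪≫ whiskerLeftIso h e ≪≫ σ⟩⟩

/-- BF3 for the class of weak equivalences. -/
theorem weakEquiv_BF3 (S : TwoSite B) {x y z : B} (w : x ⟶ y) (f : z ⟶ y)
    (hw : WeakEquiv S w) :
    ∃ (p : B) (v : p ⟶ z) (g : p ⟶ x),
      WeakEquiv S v ∧ Nonempty (g ≫ w ≅ v ≫ f) := by
  obtain ⟨p, k, g, hk, he⟩ := hw.2.exists_J_square f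
  exact ⟨p, k, g, S.weakEquiv_of_J hk, he⟩
end
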